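/- arXiv:2507.23433 — 9 statements merged into one kernel-verified Lean document; each statement's English description precedes it below -/
import Mathlib

section
/- Let 0 < α ≤ 1, 0 < p_s ≤ 1, 0 < p_g < 1, β = 1 - (1 - α·p_s)(1 - p_g), μ₁ = α·p_s·p_g/β², and μₙ = ((1-α·p_s)·p_g/β)^(n-1)·μ₁ for n ≥ 1 (with μ₀ = α·p_s·(1-p_g)/β). Then ∑_{n=0}^∞ n·μₙ = p_g/(α·p_s). -/
theorem stmt_1 (α p_s p_g β : ℝ) (μ : ℕ → ℝ)
    (hα : 0 < α) (hα1 : α ≤ 1) (hps : 0 < p_s) (hps1 : p_s ≤ 1)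
    (hpg : 0 < p_g) (hpg1 : p_g < 1)
    (hβ : β = 1 - (1 - α * p_s) * (1 - p_g))
    (hμ0 : μ 0 = α * p_s * (1 - p_g) / β)
    (hμ1 : μ 1 = α * p_s * p_g / β ^ 2)
    (hμn : ∀ n, 1 ≤ n → μ n = ((1 - α * p_s) * p_g / β) ^ (n - 1) * μ 1) :
    ∑' n : ℕ, (n : ℝ) * μ n = p_g / (α * p_s) := by
  set a := α * p_s with ha_def
  have ha : 0 < a := mul_pos hα hps
  have ha1 : a ≤ 1 := mul_le_one₀ hα1 (le_of_lt hps) hps1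
  have hβpos : 0 < β := by rw [hβ]; nlinarith
  set r := (1 - a) * p_g / β with hr_def
  have hr0 : 0 ≤ r := by
    apply div_nonneg _ (le_of_lt hβpos)
    nlinarith
  have h1mr : 1 - r = a / β := by
    rw [hr_def]
    field_simp
    rw [hβ]; ring
  have hr1 : r < 1 := by
    have : 0 < a / β := div_pos ha hβpos
    linarith
  have hrnorm : ‖r‖ < 1 := by
    rw [Real.norm_eq_abs, abs_of_nonneg hr0]; exact hr1
  have h1mrne : (1 : ℝ) - r ≠ 0 := by
    rw [h1mr]; positivity
  have hsum1 : HasSum (fun n : ℕ => ((n : ℝ) + 1) * r ^ n) (1 / (1 - r) ^ 2) := by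
    have h1 := hasSum_coe_mul_geometric_of_norm_lt_one hrnorm
    have h2 := hasSum_geometric_of_norm_lt_one hrnorm
    have h3 := h1.add h2
    have heq : r / (1 - r) ^ 2 + (1 - r)⁻¹ = 1 / (1 - r) ^ 2 := by
      field_simp; ring
    rw [heq] at h3
    have hfe : (fun n : ℕ => ((n : ℝ) + 1) * r ^ n) = fun b : ℕ => (b : ℝ) * r ^ b + r ^ b := by
      funext n; ring
    rw [hfe]; exact h3
  have hsum2 : HasSum (fun n : ℕ => ((n : ℝ) + 1) * r ^ n * μ 1) (1 / (1 - r) ^ 2 * μ 1) :=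
    hsum1.mul_right _
  have hfun : (fun n : ℕ => ((n + 1 : ℕ) : ℝ) * μ (n + 1)) =
      fun n : ℕ => ((n : ℝ) + 1) * r ^ n * μ 1 := by
    funext n
    rw [hμn (n + 1) (Nat.le_add_left 1 n)]
    push_cast
    ring
  have hsum3 : HasSum (fun n : ℕ => ((n + 1 : ℕ) : ℝ) * μ (n + 1)) (1 / (1 - r) ^ 2 * μ 1) := by
    rw [hfun]; exact hsum2
  have hsum4 : HasSum (fun n : ℕ => (n : ℝ) * μ n)
      (1 / (1 - r) ^ 2 * μ 1 + ∑ i ∈ Finset.range 1, (i : ℝ) * μ i) :=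
    (hasSum_nat_add_iff 1).mp hsum3
  have hval : 1 / (1 - r) ^ 2 * μ 1 + ∑ i ∈ Finset.range 1, (i : ℝ) * μ i = p_g / a := by
    simp only [Finset.range_one, Finset.sum_singleton, Nat.cast_zero, zero_mul, add_zero]
    rw [h1mr, hμ1]
    field_simp
  rw [hval] at hsum4
  exact hsum4.tsum_eq
end

section
/- Let 0 < p_s ≤ 1, 0 < p_g < 1, β = 1 - (1-p_s)(1-p_g), and let Δ_T ≥ 2 be an integer. Define μ₀ = p_s(1-p_g)/((Δ_T-1)p_s + β), μₙ = p_s/((Δ_T-1)p_s + β) for 1 ≤ n ≤ Δ_T-1, μ_{Δ_T} = (p_g/β)·μ_{Δ_T-1}, and μₙ = ((1-p_s)p_g/β)^{n-Δ_T}·μ_{Δ_T} for n ≥ Δ_T+1. Then ∑_{n=0}^∞ μₙ = 1. -/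
theorem stmt_2 (p_s p_g β : ℝ) (ΔT : ℕ) (μ : ℕ → ℝ)
    (hps : 0 < p_s) (hps1 : p_s ≤ 1) (hpg : 0 < p_g) (hpg1 : p_g < 1)
    (hβ : β = 1 - (1 - p_s) * (1 - p_g)) (hΔT : 2 ≤ ΔT)
    (hμ0 : μ 0 = p_s * (1 - p_g) / (((ΔT : ℝ) - 1) * p_s + β))
    (hμmid : ∀ n, 1 ≤ n → n ≤ ΔT - 1 → μ n = p_s / (((ΔT : ℝ) - 1) * p_s + β))
    (hμΔT : μ ΔT = (p_g / β) * μ (ΔT - 1))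
    (hμtail : ∀ n, ΔT + 1 ≤ n → μ n = ((1 - p_s) * p_g / β) ^ (n - ΔT) * μ ΔT) :
    ∑' n, μ n = 1 := by
  have hβval : β = p_s + (1 - p_s) * p_g := by rw [hβ]; ring
  have hβpos : 0 < β := by
    have h1 : 0 ≤ (1 - p_s) * p_g := mul_nonneg (by linarith) hpg.le
    rw [hβval]; linarith
  set r : ℝ := (1 - p_s) * p_g / β with hr
  have hr0 : 0 ≤ r := by
    apply div_nonneg _ hβpos.le
    have : p_s ≤ 1 := hps1
    nlinarith
  have hr1 : r < 1 := by
    rw [hr, div_lt_one hβpos, hβval]; linarith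
  have hkey : ∀ k, μ (k + ΔT) = r ^ k * μ ΔT := by
    intro k
    cases k with
    | zero => simp
    | succ m =>
      have h1 : ΔT + 1 ≤ m + 1 + ΔT := by omega
      have := hμtail (m + 1 + ΔT) h1
      simpa using this
  have hsumtail : Summable (fun k => μ (k + ΔT)) := by
    rw [funext hkey]
    exact (summable_geometric_of_lt_one hr0 hr1).mul_right _
  have hsum : Summable μ := (summable_nat_add_iff ΔT).mp hsumtail
  rw [← hsum.sum_add_tsum_nat_add ΔT]
  have htail : ∑' k, μ (k + ΔT) = (1 - r)⁻¹ * μ ΔT := by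
    rw [funext hkey, tsum_mul_right, tsum_geometric_of_lt_one hr0 hr1]
  set D : ℝ := ((ΔT : ℝ) - 1) * p_s + β with hDdef
  have hDpos : 0 < D := by
    have h1 : (1:ℝ) ≤ (ΔT : ℝ) - 1 := by
      have : (2:ℝ) ≤ (ΔT : ℝ) := by exact_mod_cast hΔT
      linarith
    nlinarith
  have hμprev : μ (ΔT - 1) = p_s / D := hμmid (ΔT - 1) (by omega) (by omega)
  have hfin : ∑ i ∈ Finset.range ΔT, μ i = μ 0 + ((ΔT : ℝ) - 1) * (p_s / D) := by
    have hΔe : ΔT = (ΔT - 1) + 1 := by omega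
    conv_lhs => rw [hΔe, Finset.sum_range_succ']
    have : ∀ i ∈ Finset.range (ΔT - 1), μ (i + 1) = p_s / D := by
      intro i hi
      exact hμmid (i + 1) (by omega) (by simp at hi; omega)
    rw [Finset.sum_congr rfl this, Finset.sum_const, nsmul_eq_mul, Finset.card_range]
    have hc : ((ΔT - 1 : ℕ) : ℝ) = (ΔT : ℝ) - 1 := by
      have h1 : (1:ℕ) ≤ ΔT := by omega
      push_cast [Nat.cast_sub h1]; ring
    rw [hc]; ring
  rw [hfin, htail, hμΔT, hμprev, hμ0]
  have h1r : 1 - r = p_s / β := by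
    rw [hr]; field_simp; linarith [hβval]
  rw [h1r]
  have hDne : D ≠ 0 := ne_of_gt hDpos
  have h3 : (p_s / β)⁻¹ * (p_g / β * (p_s / D)) = p_g / D := by
    rw [inv_div]
    field_simp
  rw [h3]
  have hnum : p_s * (1 - p_g) / D + ((ΔT:ℝ) - 1) * (p_s / D) + p_g / D
      = (p_s * (1 - p_g) + ((ΔT:ℝ) - 1) * p_s + p_g) / D := by ring
  rw [hnum, show p_s * (1 - p_g) + ((ΔT:ℝ) - 1) * p_s + p_g = D from by
    rw [hDdef, hβval]; ring, div_self hDne]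
end

section
/- Let 0 < p_s ≤ 1, 0 < p_g < 1, β = 1 - (1-p_s)(1-p_g), Δ_T ≥ 2 an integer, and let (μₙ) be defined as: μ₀ = p_s(1-p_g)/((Δ_T-1)p_s + β), μₙ = p_s/((Δ_T-1)p_s + β) for 1 ≤ n ≤ Δ_T-1, μ_{Δ_T} = (p_g/β)·μ_{Δ_T-1}, μₙ = ((1-p_s)p_g/β)^{n-Δ_T}·μ_{Δ_T} for n ≥ Δ_T+1. Then ∑_{n=0}^∞ n·μₙ = (1/2)·(Δ_T-1)·Δ_T·p_s/((Δ_T-1)p_s + β) + p_g/p_s. -/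
theorem stmt_3 (p_s p_g β : ℝ) (ΔT : ℕ) (μ : ℕ → ℝ)
    (hps : 0 < p_s) (hps1 : p_s ≤ 1) (hpg : 0 < p_g) (hpg1 : p_g < 1)
    (hβ : β = 1 - (1 - p_s) * (1 - p_g)) (hΔT : 2 ≤ ΔT)
    (hμ0 : μ 0 = p_s * (1 - p_g) / (((ΔT : ℝ) - 1) * p_s + β))
    (hμmid : ∀ n, 1 ≤ n → n ≤ ΔT - 1 → μ n = p_s / (((ΔT : ℝ) - 1) * p_s + β))
    (hμΔT : μ ΔT = (p_g / β) * μ (ΔT - 1))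
    (hμtail : ∀ n, ΔT + 1 ≤ n → μ n = ((1 - p_s) * p_g / β) ^ (n - ΔT) * μ ΔT) :
    ∑' n : ℕ, (n : ℝ) * μ n =
      (1 / 2) * (((ΔT : ℝ) - 1) * (ΔT : ℝ) * p_s) / (((ΔT : ℝ) - 1) * p_s + β)
        + p_g / p_s := by
  have hβpos : 0 < β := by rw [hβ]; nlinarith
  have hβne : β ≠ 0 := ne_of_gt hβpos
  set r : ℝ := (1 - p_s) * p_g / β with hrdef
  set D : ℝ := ((ΔT : ℝ) - 1) * p_s + β with hDdef
  have hΔT1 : (1 : ℝ) ≤ (ΔT : ℝ) - 1 := by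
    have : (2 : ℝ) ≤ (ΔT : ℝ) := by exact_mod_cast hΔT
    linarith
  have hDpos : 0 < D := by
    have := mul_pos (lt_of_lt_of_le one_pos hΔT1) hps
    rw [hDdef]; linarith
  have hDne : D ≠ 0 := ne_of_gt hDpos
  have hr0 : 0 ≤ r := by
    apply div_nonneg _ (le_of_lt hβpos)
    nlinarith
  have hr1 : r < 1 := by
    rw [hrdef, div_lt_one hβpos, hβ]; nlinarith
  have hone_sub_r : 1 - r = p_s / β := by
    rw [hrdef]
    field_simp
    linear_combination hβ
  -- tail values
  have hμtail' : ∀ k : ℕ, μ (k + ΔT) = r ^ k * μ ΔT := by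
    intro k
    cases k with
    | zero => simp
    | succ m =>
      have h := hμtail (m + 1 + ΔT) (by omega)
      rw [h]
      congr 1
      congr 1
      omega
  -- value of μ ΔT
  have hμΔTval : μ ΔT = p_g * p_s / (β * D) := by
    rw [hμΔT, hμmid (ΔT - 1) (by omega) le_rfl]
    field_simp
  -- summability and tsum of shifted function
  have hnorm : ‖r‖ < 1 := by rwa [Real.norm_eq_abs, abs_of_nonneg hr0]
  have hsum1 : Summable (fun k : ℕ => (k : ℝ) * r ^ k) := by
    simpa using summable_pow_mul_geometric_of_norm_lt_one 1 hnorm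
  have hsum2 : Summable (fun k : ℕ => r ^ k) := summable_geometric_of_lt_one hr0 hr1
  have hshift_eq : ∀ k : ℕ, ((k + ΔT : ℕ) : ℝ) * μ (k + ΔT)
      = μ ΔT * ((k : ℝ) * r ^ k) + ((ΔT : ℝ) * μ ΔT) * r ^ k := by
    intro k
    rw [hμtail' k]
    push_cast
    ring
  have hsumshift : Summable (fun k : ℕ => ((k + ΔT : ℕ) : ℝ) * μ (k + ΔT)) := by
    apply Summable.congr ((hsum1.mul_left (μ ΔT)).add (hsum2.mul_left ((ΔT : ℝ) * μ ΔT)))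
    intro k
    rw [hshift_eq k]
  have hsumf : Summable (fun n : ℕ => (n : ℝ) * μ n) :=
    (summable_nat_add_iff ΔT).mp hsumshift
  have hsplit := Summable.sum_add_tsum_nat_add ΔT hsumf
  have htail : (∑' k : ℕ, ((k + ΔT : ℕ) : ℝ) * μ (k + ΔT))
      = μ ΔT * (r / (1 - r) ^ 2) + ((ΔT : ℝ) * μ ΔT) * (1 - r)⁻¹ := by
    rw [tsum_congr hshift_eq,
      Summable.tsum_add (hsum1.mul_left _) (hsum2.mul_left _),
      tsum_mul_left, tsum_mul_left, tsum_geometric_of_lt_one hr0 hr1,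
      tsum_coe_mul_geometric_of_norm_lt_one hnorm]
  -- finite part
  have hfin : (∑ i ∈ Finset.range ΔT, (i : ℝ) * μ i)
      = ((ΔT : ℝ) * ((ΔT : ℝ) - 1) / 2) * (p_s / D) := by
    have h1 : (∑ i ∈ Finset.range ΔT, (i : ℝ) * μ i)
        = (∑ i ∈ Finset.range ΔT, (i : ℝ)) * (p_s / D) := by
      rw [Finset.sum_mul]
      apply Finset.sum_congr rfl
      intro i hi
      rw [Finset.mem_range] at hi
      rcases Nat.eq_zero_or_pos i with h0 | h1
      · simp [h0]
      · rw [hμmid i h1 (by omega)]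
    have h2 : ((∑ i ∈ Finset.range ΔT, i) * 2 : ℕ) = ΔT * (ΔT - 1) :=
      Finset.sum_range_id_mul_two ΔT
    have h3 : (∑ i ∈ Finset.range ΔT, (i : ℝ)) = (ΔT : ℝ) * ((ΔT : ℝ) - 1) / 2 := by
      have h4 := congrArg (fun n : ℕ => (n : ℝ)) h2
      push_cast [Nat.cast_sub (by omega : 1 ≤ ΔT)] at h4
      linarith
    rw [h1, h3]
  -- combine
  have hpsne : p_s ≠ 0 := ne_of_gt hps
  have hkey : D = (ΔT : ℝ) * p_s + (1 - p_s) * p_g := by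
    rw [hDdef, hβ]; ring
  have hD'ne : (ΔT : ℝ) * p_s + (1 - p_s) * p_g ≠ 0 := by rw [← hkey]; exact hDne
  have hterm : μ ΔT * (r / (1 - r) ^ 2) + (ΔT : ℝ) * μ ΔT * (1 - r)⁻¹ = p_g / p_s := by
    rw [hμΔTval, hone_sub_r, hrdef, hkey]
    field_simp
    have h' : p_g - p_g * p_s + p_s * (ΔT : ℝ) ≠ 0 := by intro h; apply hD'ne; linarith
    ring_nf
    rw [← neg_mul, ← add_mul, ← add_mul, mul_inv_eq_one₀ h']
    ring
  rw [← hsplit, hfin, htail, hterm]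
  ring
end

section
/- Let 0 < p_s ≤ 1, 0 < p_g < 1, β = 1 - (1-p_s)(1-p_g). Define f(Δ_T) = (1/2)·(Δ_T-1)·Δ_T·p_s/((Δ_T-1)p_s + β) + p_g/p_s for integers Δ_T ≥ 1. Then f is monotone increasing: for all integers 1 ≤ Δ_T < Δ_T', f(Δ_T) ≤ f(Δ_T'). -/
theorem stmt_4 (p_s p_g β : ℝ)
    (hps : 0 < p_s) (hps1 : p_s ≤ 1) (hpg : 0 < p_g) (hpg1 : p_g < 1)
    (hβ : β = 1 - (1 - p_s) * (1 - p_g))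
    (f : ℕ → ℝ)
    (hf : ∀ ΔT : ℕ, 1 ≤ ΔT →
      f ΔT = (1 / 2) * (((ΔT : ℝ) - 1) * (ΔT : ℝ) * p_s) / (((ΔT : ℝ) - 1) * p_s + β)
        + p_g / p_s) :
    ∀ ΔT ΔT' : ℕ, 1 ≤ ΔT → ΔT < ΔT' → f ΔT ≤ f ΔT' := by
  intro a b ha hab
  have hb : 1 ≤ b := le_trans ha hab.le
  rw [hf a ha, hf b hb]
  have hβ0 : 0 < β := by nlinarith
  set x : ℝ := (a : ℝ)
  set y : ℝ := (b : ℝ)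
  have hx : (1:ℝ) ≤ x := by show (1:ℝ) ≤ (a:ℝ); exact_mod_cast ha
  have hxy : x ≤ y := by show (a:ℝ) ≤ (b:ℝ); exact_mod_cast hab.le
  have hdx : 0 < (x - 1) * p_s + β := by nlinarith
  have hdy : 0 < (y - 1) * p_s + β := by nlinarith
  have key : (1/2) * ((x - 1) * x * p_s) / ((x - 1) * p_s + β)
      ≤ (1/2) * ((y - 1) * y * p_s) / ((y - 1) * p_s + β) := by
    rw [div_le_div_iff₀ hdx hdy]
    nlinarith [mul_nonneg (mul_nonneg (mul_nonneg hps.le (mul_nonneg (sub_nonneg.2 hx) (sub_nonneg.2 (hx.trans hxy)))) (sub_nonneg.2 hxy)) hps.le,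
      mul_nonneg (mul_nonneg hβ0.le (sub_nonneg.2 hxy)) (by nlinarith : (0:ℝ) ≤ x + y - 1)]
  linarith
end

section
/- Let 0 < p_s ≤ 1, 0 < p_g < 1, β = 1 - (1-p_s)(1-p_g), and Δ_T ≥ 2 an integer. With μₙ as in the threshold-policy stationary distribution (μₙ = p_s/((Δ_T-1)p_s + β) for 1 ≤ n ≤ Δ_T-1, μ_{Δ_T} = (p_g/β)·μ_{Δ_T-1}, μₙ = ((1-p_s)p_g/β)^{n-Δ_T}·μ_{Δ_T} for n > Δ_T), the tail probability satisfies ∑_{n=Δ_T}^∞ μₙ = p_g/((Δ_T-1)·p_s + β). -/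
theorem stmt_5 (p_s p_g β : ℝ) (ΔT : ℕ) (μ : ℕ → ℝ)
    (hps : 0 < p_s) (hps1 : p_s ≤ 1) (hpg : 0 < p_g) (hpg1 : p_g < 1)
    (hβ : β = 1 - (1 - p_s) * (1 - p_g)) (hΔT : 2 ≤ ΔT)
    (hμmid : ∀ n, 1 ≤ n → n ≤ ΔT - 1 → μ n = p_s / (((ΔT : ℝ) - 1) * p_s + β))
    (hμΔT : μ ΔT = (p_g / β) * μ (ΔT - 1))
    (hμtail : ∀ n, ΔT < n → μ n = ((1 - p_s) * p_g / β) ^ (n - ΔT) * μ ΔT) :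
    ∑' n : ℕ, μ (ΔT + n) = p_g / (((ΔT : ℝ) - 1) * p_s + β) := by
  have hβpos : 0 < β := by nlinarith
  have hΔT1 : (1:ℝ) ≤ (ΔT:ℝ) - 1 := by
    have : (2:ℝ) ≤ (ΔT:ℝ) := by exact_mod_cast hΔT
    linarith
  have hD : 0 < ((ΔT:ℝ) - 1) * p_s + β := by nlinarith
  set r := (1 - p_s) * p_g / β with hr
  have hr0 : 0 ≤ r := div_nonneg (mul_nonneg (by linarith) hpg.le) hβpos.le
  have hr1 : r < 1 := by
    rw [hr, div_lt_one hβpos]; nlinarith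
  have hkey : ∀ n : ℕ, μ (ΔT + n) = r ^ n * μ ΔT := by
    intro n
    match n with
    | 0 => simp
    | m + 1 =>
      rw [hμtail (ΔT + (m + 1)) (by omega)]
      congr 2
      omega
  rw [tsum_congr hkey, tsum_mul_right, tsum_geometric_of_lt_one hr0 hr1]
  have hμm : μ (ΔT - 1) = p_s / (((ΔT:ℝ) - 1) * p_s + β) :=
    hμmid _ (by omega) (by omega)
  have h1r : 1 - r = p_s / β := by
    rw [hr]
    rw [sub_div' hβpos.ne']
    congr 1
    rw [hβ]; ring
  rw [h1r, hμΔT, hμm]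
  rw [inv_div]
  field_simp
end

section
/- Let 0 < p_s ≤ 1 and 0 < p_g < 1 and set β = 1 - (1-p_s)(1-p_g). As α → 0⁺, the ratio of the threshold-policy average VAoI evaluated at threshold ⌈p_g/(α p_s)⌉ to the quantity p_g/(2 α p_s) tends to 1; equivalently, lim_{α→0⁺} α · [ (1/2)·(Δ(α)-1)·Δ(α)·p_s/((Δ(α)-1)p_s + β) + p_g/p_s ] = p_g/(2 p_s), where Δ(α) = ⌈p_g/(α p_s)⌉. -/
open Filter Topology

theorem stmt_8 (p_s p_g β : ℝ)
    (hps : 0 < p_s) (hps1 : p_s ≤ 1) (hpg : 0 < p_g) (hpg1 : p_g < 1)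
    (hβ : β = 1 - (1 - p_s) * (1 - p_g)) :
    Tendsto (fun α : ℝ =>
      α * ((1 / 2) * ((((⌈p_g / (α * p_s)⌉₊ : ℕ) : ℝ) - 1) * ((⌈p_g / (α * p_s)⌉₊ : ℕ) : ℝ) * p_s)
            / ((((⌈p_g / (α * p_s)⌉₊ : ℕ) : ℝ) - 1) * p_s + β)
          + p_g / p_s))
      (nhdsWithin 0 (Set.Ioi 0)) (nhds (p_g / (2 * p_s))) := by
  have hβpos : 0 < β := by nlinarith
  set N : ℝ → ℝ := fun α => ((⌈p_g / (α * p_s)⌉₊ : ℕ) : ℝ) with hNdef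
  -- N tends to atTop
  have hinv : Tendsto (fun α : ℝ => α⁻¹) (nhdsWithin 0 (Set.Ioi 0)) atTop :=
    tendsto_inv_nhdsGT_zero
  have hx : Tendsto (fun α : ℝ => p_g / (α * p_s)) (nhdsWithin 0 (Set.Ioi 0)) atTop := by
    have h := hinv.const_mul_atTop (by positivity : (0:ℝ) < p_g / p_s)
    refine h.congr fun α => ?_
    field_simp
  have hN : Tendsto N (nhdsWithin 0 (Set.Ioi 0)) atTop :=
    tendsto_atTop_mono (fun α => Nat.le_ceil _) hx
  -- α * N tends to p_g / p_s
  have hαN : Tendsto (fun α : ℝ => α * N α) (nhdsWithin 0 (Set.Ioi 0)) (nhds (p_g / p_s)) := by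
    have hlow : ∀ᶠ α in nhdsWithin 0 (Set.Ioi 0), p_g / p_s ≤ α * N α := by
      filter_upwards [self_mem_nhdsWithin] with α (hα : 0 < α)
      have h1 : p_g / (α * p_s) ≤ N α := Nat.le_ceil _
      have h2 : α * (p_g / (α * p_s)) ≤ α * N α :=
        mul_le_mul_of_nonneg_left h1 hα.le
      have h3 : α * (p_g / (α * p_s)) = p_g / p_s := by
        field_simp
      linarith
    have hhigh : ∀ᶠ α in nhdsWithin 0 (Set.Ioi 0), α * N α ≤ p_g / p_s + α := by
      filter_upwards [self_mem_nhdsWithin] with α (hα : 0 < α)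
      have hx0 : 0 ≤ p_g / (α * p_s) := by positivity
      have h1 : N α ≤ p_g / (α * p_s) + 1 := (Nat.ceil_lt_add_one hx0).le
      have h2 : α * N α ≤ α * (p_g / (α * p_s) + 1) :=
        mul_le_mul_of_nonneg_left h1 hα.le
      have h3 : α * (p_g / (α * p_s) + 1) = p_g / p_s + α := by
        field_simp
      linarith
    have hub : Tendsto (fun α : ℝ => p_g / p_s + α) (nhdsWithin 0 (Set.Ioi 0))
        (nhds (p_g / p_s)) := by
      have : Tendsto (fun α : ℝ => p_g / p_s + α) (nhdsWithin 0 (Set.Ioi 0))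
          (nhds (p_g / p_s + 0)) :=
        (tendsto_const_nhds.add (tendsto_id.mono_left nhdsWithin_le_nhds))
      simpa using this
    exact tendsto_of_tendsto_of_tendsto_of_le_of_le' tendsto_const_nhds hub hlow hhigh
  -- ratio tends to 1/p_s
  have hkey : Tendsto (fun t : ℝ => (t - 1) / ((t - 1) * p_s + β)) atTop (nhds (1 / p_s)) := by
    have h1 : Tendsto (fun t : ℝ => t - 1) atTop atTop := tendsto_atTop_add_const_right _ _ tendsto_id
    have h2 : Tendsto (fun t : ℝ => β / (t - 1)) atTop (nhds 0) := by
      have := h1.inv_tendsto_atTop.const_mul β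
      simpa [div_eq_mul_inv, Function.comp] using this
    have h3 : Tendsto (fun t : ℝ => p_s + β / (t - 1)) atTop (nhds p_s) := by
      have := (tendsto_const_nhds (x := p_s)).add h2
      simpa using this
    have h4 : Tendsto (fun t : ℝ => (p_s + β / (t - 1))⁻¹) atTop (nhds p_s⁻¹) :=
      h3.inv₀ hps.ne'
    have h5 : ∀ᶠ t in (atTop : Filter ℝ), (p_s + β / (t - 1))⁻¹
        = (t - 1) / ((t - 1) * p_s + β) := by
      filter_upwards [eventually_gt_atTop 1] with t ht
      have ht1 : (0:ℝ) < t - 1 := by linarith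
      have hd : 0 < (t - 1) * p_s + β := by positivity
      rw [eq_div_iff hd.ne', inv_mul_eq_div, div_eq_iff (by positivity : (0:ℝ) < p_s + β / (t-1)).ne']
      field_simp
    have := h4.congr' h5
    simpa [one_div] using this
  have hr : Tendsto (fun α : ℝ => (N α - 1) / ((N α - 1) * p_s + β))
      (nhdsWithin 0 (Set.Ioi 0)) (nhds (1 / p_s)) := hkey.comp hN
  -- last term tends to 0
  have hlast : Tendsto (fun α : ℝ => α * (p_g / p_s)) (nhdsWithin 0 (Set.Ioi 0)) (nhds 0) := by
    have : Tendsto (fun α : ℝ => α * (p_g / p_s)) (nhdsWithin 0 (Set.Ioi 0))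
        (nhds (0 * (p_g / p_s))) :=
      ((tendsto_id.mono_left nhdsWithin_le_nhds).mul tendsto_const_nhds)
    simpa using this
  -- assemble
  have hmain : Tendsto (fun α : ℝ =>
      (1 / 2 * p_s) * ((α * N α) * ((N α - 1) / ((N α - 1) * p_s + β))) + α * (p_g / p_s))
      (nhdsWithin 0 (Set.Ioi 0))
      (nhds ((1 / 2 * p_s) * ((p_g / p_s) * (1 / p_s)) + 0)) :=
    (tendsto_const_nhds.mul (hαN.mul hr)).add hlast
  have hval : (1 / 2 * p_s) * ((p_g / p_s) * (1 / p_s)) + 0 = p_g / (2 * p_s) := by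
    field_simp
    ring
  rw [hval] at hmain
  refine hmain.congr fun α => ?_
  simp only [hNdef]
  ring
end

section
/- Let 0 < p_s ≤ 1, 0 < p_g < 1, and β = 1 - (1-p_s)(1-p_g). Then the system of balance equations μ₀ = (1-p_g)μ₀ + p_s(1-p_g)·S, μ₁ = p_g·μ₀ + [p_s·p_g + (1-p_s)(1-p_g)]·μ₁ + p_s·p_g·(S - μ₁), and μₙ = (1-p_s)·p_g·μ_{n-1} + (1-p_s)(1-p_g)·μₙ for n ≥ 2, together with ∑_{n=0}^∞ μₙ = 1 (where S = ∑_{i=1}^∞ μᵢ), has the unique nonnegative solution μ₀ = p_s(1-p_g)/β, μ₁ = p_s·p_g/β², μₙ = ((1-p_s)·p_g/β)^{n-1}·μ₁ for n ≥ 2. -/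
theorem stmt_14 (p_s p_g β : ℝ) (μ : ℕ → ℝ)
    (hps : 0 < p_s) (hps1 : p_s ≤ 1) (hpg : 0 < p_g) (hpg1 : p_g < 1)
    (hβ : β = 1 - (1 - p_s) * (1 - p_g))
    (hnonneg : ∀ n, 0 ≤ μ n) (hsummable : Summable μ)
    (heq0 : μ 0 = (1 - p_g) * μ 0 + p_s * (1 - p_g) * (∑' i : ℕ, μ (i + 1)))
    (heq1 : μ 1 = p_g * μ 0 + (p_s * p_g + (1 - p_s) * (1 - p_g)) * μ 1
      + p_s * p_g * ((∑' i : ℕ, μ (i + 1)) - μ 1))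
    (heqn : ∀ n, 2 ≤ n → μ n = (1 - p_s) * p_g * μ (n - 1) + (1 - p_s) * (1 - p_g) * μ n)
    (hsum : ∑' n, μ n = 1) :
    μ 0 = p_s * (1 - p_g) / β ∧ μ 1 = p_s * p_g / β ^ 2 ∧
    ∀ n, 2 ≤ n → μ n = ((1 - p_s) * p_g / β) ^ (n - 1) * μ 1 := by
  have hβpos : 0 < β := by nlinarith
  have hβne : β ≠ 0 := ne_of_gt hβpos
  have hS : μ 0 + (∑' i : ℕ, μ (i + 1)) = 1 := by
    rw [← hsum, Summable.tsum_eq_zero_add hsummable]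
  have h0' : μ 0 * β = p_s * (1 - p_g) := by
    linear_combination μ 0 * hβ + heq0 + p_s * (1 - p_g) * hS
  have h0 : μ 0 = p_s * (1 - p_g) / β := by
    rw [eq_div_iff hβne]; exact h0'
  have h1 : μ 1 = p_s * p_g / β ^ 2 := by
    rw [eq_div_iff (pow_ne_zero 2 hβne)]
    linear_combination β * heq1 + (μ 1 * β) * hβ + p_s * p_g * β * hS
      + p_g * (1 - p_s) * h0' + p_s * p_g * hβ
  refine ⟨h0, h1, ?_⟩
  have hrec : ∀ n, 2 ≤ n → μ n = ((1 - p_s) * p_g / β) * μ (n - 1) := by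
    intro n hn
    rw [div_mul_eq_mul_div, eq_comm, div_eq_iff hβne]
    linear_combination -(heqn n hn) - μ n * hβ
  have key : ∀ m : ℕ, μ (m + 2) = ((1 - p_s) * p_g / β) ^ (m + 1) * μ 1 := by
    intro m
    induction m with
    | zero => simpa using hrec 2 (by norm_num)
    | succ k ih =>
      have h := hrec (k + 3) (by omega)
      have h3 : k + 3 - 1 = (k + 2) := by omega
      rw [h3] at h
      rw [show k + 1 + 2 = k + 3 from rfl, h, ih]
      ring
  intro n hn
  obtain ⟨m, rfl⟩ : ∃ m, n = m + 2 := ⟨n - 2, by omega⟩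
  have : m + 2 - 1 = m + 1 := by omega
  rw [this]
  exact key m
end

section
/- Let 0 < p_s ≤ 1 and 0 < p_g < 1, and let q, D be integers with 1 ≤ q ≤ D. Define b(q,z) = C(q,z)·p_g^z·(1-p_g)^{q-z} and β = 1 - (1-p_s)·b(D,0). Then the recursively defined sequence μ₀^{(q)} = p_s·b(q,0)/β, μₙ^{(q)} = (1/β)[(1-p_s)·∑_{i=1}^{n} b(D,i)·μ_{n-i}^{(q)} + p_s·b(q,n)] for 1 ≤ n ≤ q, μₙ^{(q)} = (1/β)·(1-p_s)·∑_{i=1}^{n} b(D,i)·μ_{n-i}^{(q)} for q < n ≤ D, and μₙ^{(q)} = (1/β)·(1-p_s)·∑_{i=1}^{D} b(D,i)·μ_{n-i}^{(q)} for n ≥ D+1, consists of nonnegative terms and satisfies ∑_{n=0}^∞ μₙ^{(q)} = 1. -/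
lemma myshift_summable {μ : ℕ → ℝ} (h : Summable μ) (k : ℕ) :
    Summable (fun n => if k ≤ n then μ (n - k) else 0) := by
  apply (summable_nat_add_iff k).mp
  have : (fun n => if k ≤ n + k then μ (n + k - k) else 0) = μ := by
    ext n; simp
  rw [this]; exact h

lemma myshift_tsum {μ : ℕ → ℝ} (h : Summable μ) (k : ℕ) :
    ∑' n, (if k ≤ n then μ (n - k) else 0) = ∑' n, μ n := by
  have hs := myshift_summable h k
  have h2 := hs.sum_add_tsum_nat_add k
  have h3 : ∑ i ∈ Finset.range k, (if k ≤ i then μ (i - k) else 0) = 0 := by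
    apply Finset.sum_eq_zero
    intro i hi
    rw [if_neg (by simpa using Finset.mem_range.mp hi |>.not_ge)]
  rw [h3, zero_add] at h2
  rw [← h2]
  exact tsum_congr fun n => by simp

lemma mysum_shift_le {μ : ℕ → ℝ} (h : ∀ n, 0 ≤ μ n) (k N : ℕ) :
    ∑ n ∈ Finset.range N, (if k ≤ n then μ (n - k) else 0) ≤ ∑ n ∈ Finset.range N, μ n := by
  rw [← Finset.sum_filter]
  have : (Finset.range N).filter (fun n => k ≤ n) = Finset.Ico k N := by
    ext n; simp [Finset.mem_Ico, and_comm]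
  rw [this, Finset.sum_Ico_eq_sum_range]
  simp only [Nat.add_sub_cancel_left]
  apply Finset.sum_le_sum_of_subset_of_nonneg
  · exact Finset.range_subset_range.mpr (Nat.sub_le N k)
  · intro i _ _; exact h i

theorem stmt_15 (p_s p_g : ℝ) (q D : ℕ) (μ : ℕ → ℝ)
    (hps : 0 < p_s) (hps1 : p_s ≤ 1) (hpg : 0 < p_g) (hpg1 : p_g < 1)
    (hq : 1 ≤ q) (hqD : q ≤ D)
    (b : ℕ → ℕ → ℝ)
    (hb : ∀ n z : ℕ, b n z = (n.choose z : ℝ) * p_g ^ z * (1 - p_g) ^ (n - z))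
    (β : ℝ) (hβ : β = 1 - (1 - p_s) * b D 0)
    (hμ0 : μ 0 = p_s * b q 0 / β)
    (hμ1 : ∀ n, 1 ≤ n → n ≤ q →
      μ n = (1 / β) * ((1 - p_s) * (∑ i ∈ Finset.Icc 1 n, b D i * μ (n - i)) + p_s * b q n))
    (hμ2 : ∀ n, q < n → n ≤ D →
      μ n = (1 / β) * ((1 - p_s) * (∑ i ∈ Finset.Icc 1 n, b D i * μ (n - i))))
    (hμ3 : ∀ n, D + 1 ≤ n →
      μ n = (1 / β) * ((1 - p_s) * (∑ i ∈ Finset.Icc 1 D, b D i * μ (n - i)))) :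
    (∀ n, 0 ≤ μ n) ∧ ∑' n, μ n = 1 := by
  have h1pg : (0:ℝ) < 1 - p_g := by linarith
  have h1ps : (0:ℝ) ≤ 1 - p_s := by linarith
  -- nonnegativity of b
  have hbnn : ∀ n z : ℕ, 0 ≤ b n z := by
    intro n z
    rw [hb]
    positivity
  -- b n z = 0 for z > n
  have hbz : ∀ n z : ℕ, n < z → b n z = 0 := by
    intro n z hz
    rw [hb, Nat.choose_eq_zero_of_lt hz]
    simp
  -- binomial sum = 1
  have bsum : ∀ m : ℕ, ∑ z ∈ Finset.range (m + 1), b m z = 1 := by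
    intro m
    have h := add_pow p_g (1 - p_g) m
    have h1 : p_g + (1 - p_g) = 1 := by ring
    rw [h1, one_pow] at h
    rw [h]
    apply Finset.sum_congr rfl
    intro z _
    rw [hb]; ring
  -- partial binomial sums ≤ 1
  have hble : ∀ M : ℕ, ∑ z ∈ Finset.range M, b q z ≤ 1 := by
    intro M
    have hsub : ∑ z ∈ Finset.range M, b q z ≤ ∑ z ∈ Finset.range (max M (q + 1)), b q z := by
      apply Finset.sum_le_sum_of_subset_of_nonneg
      · exact Finset.range_subset_range.mpr (le_max_left _ _)
      · intro i _ _; exact hbnn q i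
    have heq : ∑ z ∈ Finset.range (max M (q + 1)), b q z = ∑ z ∈ Finset.range (q + 1), b q z := by
      symm
      apply Finset.sum_subset (Finset.range_subset_range.mpr (le_max_right _ _))
      intro z _ hz
      exact hbz q z (by simpa using hz)
    rw [heq, bsum q] at hsub
    exact hsub
  -- β > 0
  have hbD0 : b D 0 ≤ 1 := by
    rw [hb]
    simp only [Nat.choose_zero_right, Nat.cast_one, pow_zero, one_mul, Nat.sub_zero]
    exact pow_le_one₀ (by linarith) (by linarith)
  have hbD0nn : 0 ≤ b D 0 := hbnn D 0
  have hβpos : 0 < β := by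
    rw [hβ]
    nlinarith
  have hβne : β ≠ 0 := ne_of_gt hβpos
  -- sum of weights
  have csum : ∑ i ∈ Finset.Icc 1 D, (1 - p_s) * b D i = β - p_s := by
    have h0 : ∑ i ∈ Finset.Icc 1 D, b D i = 1 - b D 0 := by
      have h1 : ∑ z ∈ Finset.range (D + 1), b D z
          = ∑ i ∈ Finset.range D, b D (i + 1) + b D 0 := Finset.sum_range_succ' _ _
      have h2 : ∑ i ∈ Finset.Icc 1 D, b D i = ∑ i ∈ Finset.range D, b D (i + 1) := by
        rw [← Finset.Ico_add_one_right_eq_Icc, Finset.sum_Ico_eq_sum_range]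
        simp [add_comm]
      rw [bsum D] at h1
      rw [h2]
      linarith
    rw [← Finset.mul_sum, h0, hβ]
    ring
  -- unified recursion
  have key : ∀ n : ℕ, 1 ≤ n → β * μ n =
      (∑ i ∈ Finset.Icc 1 D, (if i ≤ n then (1 - p_s) * b D i * μ (n - i) else 0))
        + p_s * b q n := by
    intro n hn
    have hfold : ∀ X : ℝ, β * ((1 / β) * X) = X := by
      intro X
      field_simp
    by_cases hnD : n ≤ D
    · have hform : μ n = (1 / β) *
          ((1 - p_s) * (∑ i ∈ Finset.Icc 1 n, b D i * μ (n - i)) + p_s * b q n) := by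
        by_cases hnq : n ≤ q
        · exact hμ1 n hn hnq
        · rw [hbz q n (not_le.mp hnq), mul_zero, add_zero]
          exact hμ2 n (not_le.mp hnq) hnD
      rw [hform, hfold]
      congr 1
      rw [Finset.mul_sum]
      have hsub : ∑ i ∈ Finset.Icc 1 n, (if i ≤ n then (1 - p_s) * b D i * μ (n - i) else 0)
          = ∑ i ∈ Finset.Icc 1 D, (if i ≤ n then (1 - p_s) * b D i * μ (n - i) else 0) := by
        apply Finset.sum_subset (Finset.Icc_subset_Icc_right hnD)
        intro i hiD hi
        have h1i := (Finset.mem_Icc.mp hiD).1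
        rw [if_neg]
        intro hle
        exact hi (Finset.mem_Icc.mpr ⟨h1i, hle⟩)
      rw [← hsub]
      apply Finset.sum_congr rfl
      intro i hi
      rw [if_pos (Finset.mem_Icc.mp hi).2]
      ring
    · push_neg at hnD
      rw [hμ3 n (by omega), hfold]
      rw [hbz q n (by omega), mul_zero, add_zero, Finset.mul_sum]
      apply Finset.sum_congr rfl
      intro i hi
      rw [if_pos (le_of_lt (lt_of_le_of_lt (Finset.mem_Icc.mp hi).2 hnD))]
      ring
  -- nonnegativity
  have hμnn : ∀ n, 0 ≤ μ n := by
    intro n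
    induction n using Nat.strong_induction_on with
    | _ n ih =>
      match n with
      | 0 =>
        rw [hμ0]
        exact div_nonneg (mul_nonneg hps.le (hbnn q 0)) hβpos.le
      | Nat.succ m =>
        have hk := key (m + 1) (Nat.succ_le_succ (Nat.zero_le m))
        have hX : μ (m + 1) = ((∑ i ∈ Finset.Icc 1 D,
            (if i ≤ m + 1 then (1 - p_s) * b D i * μ (m + 1 - i) else 0))
              + p_s * b q (m + 1)) / β := by
          field_simp
          linarith [hk]
        rw [hX]
        apply div_nonneg _ (le_of_lt hβpos)
        apply add_nonneg
        · apply Finset.sum_nonneg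
          intro i hi
          by_cases h : i ≤ m + 1
          · rw [if_pos h]
            have h1 : 1 ≤ i := (Finset.mem_Icc.mp hi).1
            have : m + 1 - i < m + 1 := by omega
            exact mul_nonneg (mul_nonneg h1ps (hbnn D i)) (ih _ this)
          · rw [if_neg h]
        · exact mul_nonneg (le_of_lt hps) (hbnn q (m + 1))
  refine ⟨hμnn, ?_⟩
  have hβμ0 : β * μ 0 = p_s * b q 0 := by
    rw [hμ0]
    field_simp
  have hcnn : ∀ i, 0 ≤ (1 - p_s) * b D i := fun i => mul_nonneg h1ps (hbnn D i)
  have hβps : 0 ≤ β - p_s := by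
    rw [← csum]
    exact Finset.sum_nonneg fun i _ => hcnn i
  -- partial sums ≤ 1
  have hpsum : ∀ N : ℕ, ∑ n ∈ Finset.range N, μ n ≤ 1 := by
    intro N
    match N with
    | 0 => simp
    | Nat.succ M =>
      set S := ∑ n ∈ Finset.range (M + 1), μ n with hS
      have hSnn : 0 ≤ S := Finset.sum_nonneg fun i _ => hμnn i
      have hsplit : β * S = p_s * b q 0 + ∑ n ∈ Finset.range M, β * μ (n + 1) := by
        rw [hS, Finset.mul_sum, Finset.sum_range_succ' (fun n => β * μ n) M, hβμ0]
        ring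
      have hterm : ∀ n ∈ Finset.range M, β * μ (n + 1) =
          (∑ i ∈ Finset.Icc 1 D, (if i ≤ n + 1 then (1 - p_s) * b D i * μ (n + 1 - i) else 0))
            + p_s * b q (n + 1) := fun n _ => key (n + 1) (Nat.succ_le_succ (Nat.zero_le n))
      rw [Finset.sum_congr rfl hterm, Finset.sum_add_distrib] at hsplit
      -- bound the double sum
      have hdouble : ∑ n ∈ Finset.range M, ∑ i ∈ Finset.Icc 1 D,
          (if i ≤ n + 1 then (1 - p_s) * b D i * μ (n + 1 - i) else 0) ≤ (β - p_s) * S := by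
        rw [Finset.sum_comm, ← csum, Finset.sum_mul]
        apply Finset.sum_le_sum
        intro i hi
        have h1i : 1 ≤ i := (Finset.mem_Icc.mp hi).1
        have hrw : ∀ n, (if i ≤ n + 1 then (1 - p_s) * b D i * μ (n + 1 - i) else 0)
            = (1 - p_s) * b D i * (if i - 1 ≤ n then μ (n - (i - 1)) else 0) := by
          intro n
          by_cases h : i ≤ n + 1
          · rw [if_pos h, if_pos (by omega)]
            congr 2
            omega
          · rw [if_neg h, if_neg (by omega), mul_zero]
        calc ∑ n ∈ Finset.range M, (if i ≤ n + 1 then (1 - p_s) * b D i * μ (n + 1 - i) else 0)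
            = (1 - p_s) * b D i * ∑ n ∈ Finset.range M,
                (if i - 1 ≤ n then μ (n - (i - 1)) else 0) := by
              rw [Finset.mul_sum]
              exact Finset.sum_congr rfl fun n _ => hrw n
          _ ≤ (1 - p_s) * b D i * ∑ n ∈ Finset.range M, μ n := by
              apply mul_le_mul_of_nonneg_left (mysum_shift_le hμnn _ _) (hcnn i)
          _ ≤ (1 - p_s) * b D i * S := by
              apply mul_le_mul_of_nonneg_left _ (hcnn i)
              rw [hS]
              apply Finset.sum_le_sum_of_subset_of_nonneg
              · exact Finset.range_subset_range.mpr (by omega)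
              · intro j _ _; exact hμnn j
      have htail : ∑ n ∈ Finset.range M, p_s * b q (n + 1) ≤ p_s * (1 - b q 0) := by
        rw [← Finset.mul_sum]
        apply mul_le_mul_of_nonneg_left _ (le_of_lt hps)
        have h1 : ∑ z ∈ Finset.range (M + 1), b q z
            = ∑ n ∈ Finset.range M, b q (n + 1) + b q 0 := Finset.sum_range_succ' _ _
        have h2 := hble (M + 1)
        linarith
      have : β * S ≤ (β - p_s) * S + p_s := by
        have := hbnn q 0
        nlinarith
      nlinarith
  -- summability
  have hsummable : Summable μ :=
    summable_of_sum_range_le hμnn hpsum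
  -- compute the tsum
  set S := ∑' n, μ n with hS
  have hSnn : 0 ≤ S := tsum_nonneg hμnn
  have hshiftsum : Summable (fun n => μ (n + 1)) := (summable_nat_add_iff 1).mpr hsummable
  have hzero_add : S = μ 0 + ∑' n, μ (n + 1) := hsummable.tsum_eq_zero_add
  -- summability of pieces
  have hgsummable : ∀ i ∈ Finset.Icc 1 D, Summable (fun n =>
      (if i ≤ n + 1 then (1 - p_s) * b D i * μ (n + 1 - i) else 0)) := by
    intro i hi
    have h1i : 1 ≤ i := (Finset.mem_Icc.mp hi).1
    have hrw : (fun n => (if i ≤ n + 1 then (1 - p_s) * b D i * μ (n + 1 - i) else 0))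
        = fun n => (1 - p_s) * b D i * (if i - 1 ≤ n then μ (n - (i - 1)) else 0) := by
      ext n
      by_cases h : i ≤ n + 1
      · rw [if_pos h, if_pos (by omega)]
        congr 2
        omega
      · rw [if_neg h, if_neg (by omega), mul_zero]
    rw [hrw]
    exact (myshift_summable hsummable (i - 1)).mul_left _
  have hgtsum : ∀ i ∈ Finset.Icc 1 D, ∑' n,
      (if i ≤ n + 1 then (1 - p_s) * b D i * μ (n + 1 - i) else 0) = (1 - p_s) * b D i * S := by
    intro i hi
    have h1i : 1 ≤ i := (Finset.mem_Icc.mp hi).1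
    have hrw : (fun n => (if i ≤ n + 1 then (1 - p_s) * b D i * μ (n + 1 - i) else 0))
        = fun n => (1 - p_s) * b D i * (if i - 1 ≤ n then μ (n - (i - 1)) else 0) := by
      ext n
      by_cases h : i ≤ n + 1
      · rw [if_pos h, if_pos (by omega)]
        congr 2
        omega
      · rw [if_neg h, if_neg (by omega), mul_zero]
    calc ∑' n, (if i ≤ n + 1 then (1 - p_s) * b D i * μ (n + 1 - i) else 0)
        = ∑' n, (1 - p_s) * b D i * (if i - 1 ≤ n then μ (n - (i - 1)) else 0) := by
          rw [hrw]
      _ = (1 - p_s) * b D i * ∑' n, (if i - 1 ≤ n then μ (n - (i - 1)) else 0) := tsum_mul_left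
      _ = (1 - p_s) * b D i * S := by rw [myshift_tsum hsummable]
  have hAsummable : Summable (fun n => ∑ i ∈ Finset.Icc 1 D,
      (if i ≤ n + 1 then (1 - p_s) * b D i * μ (n + 1 - i) else 0)) :=
    summable_sum hgsummable
  have hBsummable : Summable (fun n => p_s * b q (n + 1)) := by
    apply summable_of_ne_finset_zero (s := Finset.range q)
    intro n hn
    rw [hbz q (n + 1) (by simp at hn; omega), mul_zero]
  have hBtsum : ∑' n, p_s * b q (n + 1) = p_s * (1 - b q 0) := by
    rw [tsum_eq_sum (s := Finset.range q) (fun n hn => by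
      rw [hbz q (n + 1) (by simp at hn; omega), mul_zero])]
    rw [← Finset.mul_sum]
    congr 1
    have h1 : ∑ z ∈ Finset.range (q + 1), b q z
        = ∑ n ∈ Finset.range q, b q (n + 1) + b q 0 := Finset.sum_range_succ' _ _
    rw [bsum q] at h1
    linarith
  have hmain : β * (S - μ 0) = (β - p_s) * S + p_s * (1 - b q 0) := by
    have h1 : β * (S - μ 0) = ∑' n, β * μ (n + 1) := by
      rw [tsum_mul_left, hzero_add]
      ring
    have h2 : ∀ n : ℕ, β * μ (n + 1) =
        (∑ i ∈ Finset.Icc 1 D, (if i ≤ n + 1 then (1 - p_s) * b D i * μ (n + 1 - i) else 0))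
          + p_s * b q (n + 1) := fun n => key (n + 1) (Nat.succ_le_succ (Nat.zero_le n))
    rw [h1, tsum_congr h2, hAsummable.tsum_add hBsummable,
      Summable.tsum_finsetSum hgsummable, Finset.sum_congr rfl hgtsum, ← Finset.sum_mul, csum, hBtsum]
  have hfinal : p_s * S = p_s := by
    linear_combination hmain + hβμ0
  exact mul_left_cancel₀ hps.ne' (by linarith : p_s * S = p_s * 1)
end

section
/- Let 0 < p_s ≤ 1 and 0 < p_g < 1, and let Δ_T ≥ 2 be an integer with β = 1 - (1-p_s)(1-p_g). Consider the balance equations: μ₀ = (1-p_g)μ₀ + p_s(1-p_g)·T, μ₁ = p_g·μ₀ + (1-p_s)·μ₁ + p_s·p_g·T, μₙ = μ_{n-1} for 2 ≤ n ≤ Δ_T-1, μ_{Δ_T} = p_g·μ_{Δ_T-1} + (1-p_s)(1-p_g)·μ_{Δ_T}, and μₙ = (1-p_s)p_g·μ_{n-1} + (1-p_s)(1-p_g)·μₙ for n ≥ Δ_T+1, where T = ∑_{i=Δ_T}^∞ μᵢ, together with ∑_{n=0}^∞ μₙ = 1. Then the unique nonnegative solution is μ₀ = p_s(1-p_g)/((Δ_T-1)p_s+β),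 μₙ = p_s/((Δ_T-1)p_s+β) for 1 ≤ n ≤ Δ_T-1, μ_{Δ_T} = (p_g/β)μ_{Δ_T-1}, and μₙ = ((1-p_s)p_g/β)^{n-Δ_T}·μ_{Δ_T} for n ≥ Δ_T+1. -/
theorem stmt_16 (p_s p_g β : ℝ) (ΔT : ℕ) (μ : ℕ → ℝ)
    (hps : 0 < p_s) (hps1 : p_s ≤ 1) (hpg : 0 < p_g) (hpg1 : p_g < 1)
    (hβ : β = 1 - (1 - p_s) * (1 - p_g)) (hΔT : 2 ≤ ΔT)
    (hnonneg : ∀ n, 0 ≤ μ n) (hsummable : Summable μ)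
    (heq0 : μ 0 = (1 - p_g) * μ 0 + p_s * (1 - p_g) * (∑' i : ℕ, μ (ΔT + i)))
    (heq1 : μ 1 = p_g * μ 0 + (1 - p_s) * μ 1 + p_s * p_g * (∑' i : ℕ, μ (ΔT + i)))
    (heqmid : ∀ n, 2 ≤ n → n ≤ ΔT - 1 → μ n = μ (n - 1))
    (heqΔT : μ ΔT = p_g * μ (ΔT - 1) + (1 - p_s) * (1 - p_g) * μ ΔT)
    (heqtail : ∀ n, ΔT + 1 ≤ n →
      μ n = (1 - p_s) * p_g * μ (n - 1) + (1 - p_s) * (1 - p_g) * μ n)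
    (hsum : ∑' n, μ n = 1) :
    μ 0 = p_s * (1 - p_g) / (((ΔT : ℝ) - 1) * p_s + β) ∧
    (∀ n, 1 ≤ n → n ≤ ΔT - 1 → μ n = p_s / (((ΔT : ℝ) - 1) * p_s + β)) ∧
    μ ΔT = (p_g / β) * μ (ΔT - 1) ∧
    ∀ n, ΔT + 1 ≤ n → μ n = ((1 - p_s) * p_g / β) ^ (n - ΔT) * μ ΔT := by
  set T : ℝ := ∑' i : ℕ, μ (ΔT + i) with hT
  have hβpos : 0 < β := by nlinarith
  have hβne : β ≠ 0 := ne_of_gt hβpos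
  set r : ℝ := (1 - p_s) * p_g / β with hr
  have hr0 : 0 ≤ r := by
    apply div_nonneg _ hβpos.le
    nlinarith
  have hr1 : r < 1 := by
    rw [hr, div_lt_one hβpos]
    nlinarith
  -- geometric tail
  have hgeo : ∀ i : ℕ, μ (ΔT + i) = r ^ i * μ ΔT := by
    intro i
    induction i with
    | zero => simp
    | succ k ih =>
      have h := heqtail (ΔT + (k + 1)) (by omega)
      have hidx : ΔT + (k + 1) - 1 = ΔT + k := by omega
      rw [hidx, ih] at h
      have h2 : μ (ΔT + (k + 1)) = (1 - p_s) * p_g * (r ^ k * μ ΔT) / β := by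
        rw [eq_div_iff hβne]
        linear_combination h + μ (ΔT + (k + 1)) * hβ
      rw [h2, hr, pow_succ]
      ring
  -- T via geometric series
  have hTval : (1 - r) * T = μ ΔT := by
    have h1 : T = (1 - r)⁻¹ * μ ΔT := by
      rw [hT]
      rw [tsum_congr hgeo, tsum_mul_right, tsum_geometric_of_lt_one hr0 hr1]
    rw [h1, ← mul_assoc, mul_inv_cancel₀ (by linarith : (1 : ℝ) - r ≠ 0), one_mul]
  -- mid equality
  have hmid : ∀ n, 1 ≤ n → n ≤ ΔT - 1 → μ n = μ 1 := by
    intro n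
    induction n with
    | zero => omega
    | succ k ih =>
      intro _ hle
      rcases Nat.eq_or_lt_of_le (show 1 ≤ k + 1 from by omega) with h1 | h1
      · simp [← h1]
      · have h := heqmid (k + 1) (by omega) hle
        simp only [Nat.add_sub_cancel] at h
        rw [h, ih (by omega) (by omega)]
  have hTnonneg : 0 ≤ T := tsum_nonneg (fun i => hnonneg _)
  -- basic equations
  have hμ0 : p_g * μ 0 = p_s * (1 - p_g) * T := by linarith [heq0]
  have hμ1 : μ 1 = T := by
    have h : p_s * μ 1 = p_g * μ 0 + p_s * p_g * T := by linarith [heq1]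
    rw [hμ0] at h
    have : p_s * μ 1 = p_s * T := by linarith
    exact mul_left_cancel₀ (ne_of_gt hps) this
  have hμΔT : β * μ ΔT = p_g * μ (ΔT - 1) := by
    rw [hβ]; nlinarith [heqΔT]
  have hΔTm1 : μ (ΔT - 1) = T := by
    rw [hmid (ΔT - 1) (by omega) (le_refl _), hμ1]
  have h1r : 1 - r = p_s / β := by
    rw [hr]; field_simp; rw [hβ]; ring
  have hkey : p_s * T = p_g * T := by
    have h2 : p_s / β * T = μ ΔT := by rw [← h1r]; exact hTval
    have h3 : p_s * T = β * μ ΔT := by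
      rw [← h2]; field_simp
    rw [hμΔT, hΔTm1] at h3
    exact h3
  -- T > 0
  have hTpos : 0 < T := by
    rcases lt_or_eq_of_le hTnonneg with h | h
    · exact h
    · exfalso
      have hT0 : T = 0 := h.symm
      have hμΔT0 : μ ΔT = 0 := by rw [← hTval, hT0]; ring
      have hall : ∀ n, μ n = 0 := by
        intro n
        rcases Nat.lt_or_ge n ΔT with hn | hn
        · rcases Nat.eq_zero_or_pos n with h0 | h0
          · subst h0
            rw [hT0] at hμ0
            nlinarith [hμ0]
          · rw [hmid n h0 (by omega), hμ1, hT0]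
        · obtain ⟨i, rfl⟩ := Nat.exists_eq_add_of_le hn
          rw [hgeo i, hμΔT0]; ring
      have h10 : (1 : ℝ) = 0 := by
        rw [← hsum]
        have hf : μ = fun _ => 0 := funext hall
        rw [hf, tsum_zero]
      norm_num at h10
  have hpspg : p_s = p_g := mul_right_cancel₀ (ne_of_gt hTpos) hkey
  -- total sum split
  have hsplit : ∑' n, μ n = (∑ i ∈ Finset.range ΔT, μ i) + T := by
    rw [← Summable.sum_add_tsum_nat_add ΔT hsummable]
    congr 1
    rw [hT]
    exact tsum_congr fun i => by rw [Nat.add_comm]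
  have hrange : ∑ i ∈ Finset.range ΔT, μ i = μ 0 + ((ΔT : ℝ) - 1) * T := by
    rw [Finset.range_eq_Ico, Finset.sum_eq_sum_Ico_succ_bot (by omega : 0 < ΔT)]
    have hconst : ∑ i ∈ Finset.Ico 1 ΔT, μ i = ∑ _i ∈ Finset.Ico 1 ΔT, T := by
      apply Finset.sum_congr rfl
      intro i hi
      simp only [Finset.mem_Ico] at hi
      rw [hmid i hi.1 (by omega), hμ1]
    rw [show (0 : ℕ) + 1 = 1 from rfl, hconst, Finset.sum_const, Nat.card_Ico,
      nsmul_eq_mul]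
    congr 1
    push_cast [Nat.cast_sub (by omega : 1 ≤ ΔT)]
    ring
  have hμ0T : μ 0 = (1 - p_g) * T := by
    have h : p_g * μ 0 = p_g * ((1 - p_g) * T) := by
      rw [hμ0, hpspg]; ring
    exact mul_left_cancel₀ (ne_of_gt hpg) h
  have htotal : μ 0 + ((ΔT : ℝ) - 1) * T + T = 1 := by
    rw [hsplit, hrange] at hsum
    linarith [hsum]
  have hTeq : T * ((ΔT : ℝ) + 1 - p_g) = 1 := by
    rw [hμ0T] at htotal
    linear_combination htotal
  have hΔT2 : (2 : ℝ) ≤ (ΔT : ℝ) := by exact_mod_cast hΔT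
  have hDpos : 0 < ((ΔT : ℝ) + 1 - p_g) := by nlinarith
  have hD : ((ΔT : ℝ) - 1) * p_s + β = p_s * ((ΔT : ℝ) + 1 - p_g) := by
    rw [hβ, hpspg]; ring
  have hDne : ((ΔT : ℝ) - 1) * p_s + β ≠ 0 := by
    rw [hD]; positivity
  have hTform : T = p_s / (((ΔT : ℝ) - 1) * p_s + β) := by
    rw [eq_div_iff hDne, hD]
    linear_combination p_s * hTeq
  refine ⟨?_, ?_, ?_, ?_⟩
  · rw [hμ0T, hTform]; ring
  · intro n h1 h2; rw [hmid n h1 h2, hμ1, hTform]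
  · rw [div_mul_eq_mul_div, eq_div_iff hβne]
    linear_combination hμΔT
  · intro n hn
    have h := hgeo (n - ΔT)
    rw [show ΔT + (n - ΔT) = n from by omega] at h
    rw [h, hr]
end
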